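/- Let (Ω, F, ℙ) be a probability space with a filtration (F_k)_{k∈ℕ}, and let (x_k)_{k∈ℕ} and (x̂_k)_{k∈ℕ} be ℝⁿ-valued adapted stochastic processes with deterministic initial conditions x_0 = a and x̂_0 = â. Suppose there exist a Borel-measurable function S : ℝⁿ × ℝⁿ → ℝ≥0 and constants α > 0, ψ ≥ 0 such that: (i) α‖x − x̂‖² ≤ S(x, x̂) for all x, x̂ ∈ ℝⁿ; (ii) S(x_k, x̂_k) is integrable for every k and 𝔼[S(x_{k+1}, x̂_{k+1}) | F_k] ≤ S(x_k, x̂_k) + ψ almost surely for all k ∈ ℕ. Then for every ε > 0 and every finite time horizon T ∈ ℕ⁺, ℙ{ sup_{0 ≤ k ≤ T} ‖x_k − x̂_k‖ ≥ ε } ≤ (S(a, â) + ψ·T) / (α ε²). -/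

import Mathlib

/-!
Along the trajectories, `S (x k) (x̂ k)` grows in conditional mean by at most `ψ` per step, so
`S (x k) (x̂ k) + ψ (T - k)` is a supermartingale, nonnegative up to the horizon `T`, and it
starts at `S a â + ψ T`. Stopping it at the first time `k ≤ T` at which it reaches `α ε²`
(optional stopping) gives a maximal inequality of Markov type for this supermartingale, and
`α ‖x k - x̂ k‖² ≤ S (x k) (x̂ k)` turns `‖x k - x̂ k‖ ≥ ε` into such a crossing.
-/

open MeasureTheory

namespace MeasureTheory

variable {Ω : Type*} {m0 : MeasurableSpace Ω} {μ : Measure Ω} [IsFiniteMeasure μ]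
  {𝒢 : Filtration ℕ m0}

theorem supermartingale_add_mul_sub_of_condExp_le_add {f : ℕ → Ω → ℝ}
    (hadp : StronglyAdapted 𝒢 f) (hint : ∀ k, Integrable (f k) μ) {ψ : ℝ}
    (hdrift : ∀ k, μ[f (k + 1) | 𝒢 k] ≤ᵐ[μ] fun ω => f k ω + ψ) (c : ℝ) :
    Supermartingale (fun k ω => f k ω + ψ * (c - k)) 𝒢 μ := by
  refine supermartingale_nat (fun k => (hadp k).add stronglyMeasurable_const)
    (fun k => (hint k).add (integrable_const _)) fun k => ?_
  have hcondExp : μ[fun ω => f (k + 1) ω + ψ * (c - ↑(k + 1)) | 𝒢 k]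
      =ᵐ[μ] μ[f (k + 1) | 𝒢 k] + fun _ => ψ * (c - ↑(k + 1)) :=
    (condExp_add (hint (k + 1)) (integrable_const _) (𝒢 k)).trans
      (by rw [condExp_const (𝒢.le k)])
  filter_upwards [hcondExp, hdrift k] with ω hω hd
  rw [hω, Pi.add_apply, Nat.cast_succ]
  linarith

namespace Supermartingale

variable {g : ℕ → Ω → ℝ}

theorem integral_stoppedValue_le (hg : Supermartingale g 𝒢 μ) {τ : Ω → ℕ∞}
    (hτ : IsStoppingTime 𝒢 τ) {N : ℕ} (hbdd : ∀ ω, τ ω ≤ N) :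
    ∫ ω, stoppedValue g τ ω ∂μ ≤ ∫ ω, g 0 ω ∂μ := by
  have h := hg.neg.expected_stoppedValue_mono (isStoppingTime_const 𝒢 0) hτ
    (fun _ => zero_le) hbdd
  simp only [stoppedValue, Pi.neg_apply, integral_neg, neg_le_neg_iff] at h
  exact h

theorem mul_measureReal_exists_ge_le (hg : Supermartingale g 𝒢 μ) {N : ℕ}
    (hnonneg : ∀ k ≤ N, ∀ ω, 0 ≤ g k ω) (c : ℝ) :
    c * μ.real {ω | ∃ k ≤ N, c ≤ g k ω} ≤ ∫ ω, g 0 ω ∂μ := by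
  set σ : Ω → ℕ := hittingBtwn g (Set.Ici c) 0 N
  have hσ_le : ∀ ω, σ ω ≤ N := hittingBtwn_le
  have hσ_le' : ∀ ω, ((σ ω : ℕ) : ℕ∞) ≤ N := fun ω => ENat.natCast_le_natCast.mpr (hσ_le ω)
  have hσ : IsStoppingTime 𝒢 (fun ω => σ ω) :=
    hg.stronglyAdapted.adapted.isStoppingTime_hittingBtwn measurableSet_Ici
  have hint : Integrable (stoppedValue g fun ω => σ ω) μ :=
    integrable_stoppedValue ℕ hσ hg.integrable hσ_le'
  have hmeas : MeasurableSet {ω | ∃ k ≤ N, c ≤ g k ω} := by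
    have : {ω | ∃ k ≤ N, c ≤ g k ω} = ⋃ k ∈ Set.Iic N, {ω | c ≤ g k ω} := by ext; simp
    rw [this]
    exact .biUnion (Set.to_countable _) fun k _ =>
      measurableSet_le measurable_const ((hg.stronglyMeasurable k).measurable.mono (𝒢.le k) le_rfl)
  have hge : ∀ ω ∈ {ω | ∃ k ≤ N, c ≤ g k ω}, c ≤ stoppedValue g (fun ω => σ ω) ω := by
    rintro ω ⟨k, hkN, hk⟩
    exact stoppedValue_hittingBtwn_mem ⟨k, ⟨zero_le, hkN⟩, hk⟩
  calc c * μ.real {ω | ∃ k ≤ N, c ≤ g k ω}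
      ≤ ∫ ω in {ω | ∃ k ≤ N, c ≤ g k ω}, stoppedValue g (fun ω => σ ω) ω ∂μ :=
        setIntegral_ge_of_const_le_real hmeas (measure_ne_top _ _) hge hint.integrableOn
    _ ≤ ∫ ω, stoppedValue g (fun ω => σ ω) ω ∂μ :=
        setIntegral_le_integral hint (.of_forall fun ω => hnonneg _ (hσ_le ω) ω)
    _ ≤ ∫ ω, g 0 ω ∂μ := hg.integral_stoppedValue_le hσ hσ_le'

theorem measure_exists_ge_le (hg : Supermartingale g 𝒢 μ) {N : ℕ}
    (hnonneg : ∀ k ≤ N, ∀ ω, 0 ≤ g k ω) {c : ℝ} (hc : 0 < c) :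
    μ {ω | ∃ k ≤ N, c ≤ g k ω} ≤ ENNReal.ofReal ((∫ ω, g 0 ω ∂μ) / c) := by
  have hint_nonneg : 0 ≤ ∫ ω, g 0 ω ∂μ := integral_nonneg (hnonneg 0 zero_le)
  rw [ENNReal.le_ofReal_iff_toReal_le (measure_ne_top _ _) (div_nonneg hint_nonneg hc.le),
    le_div_iff₀ hc, mul_comm]
  exact hg.mul_measureReal_exists_ge_le hnonneg c

end Supermartingale

end MeasureTheory

theorem sbf_probabilistic_closeness_finite_horizon_general
    {Ω : Type*} {m0 : MeasurableSpace Ω} {μ : Measure Ω} [IsProbabilityMeasure μ]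
    {n : ℕ} (ℱ : Filtration ℕ m0)
    (x xhat : ℕ → Ω → EuclideanSpace ℝ (Fin n))
    (a ahat : EuclideanSpace ℝ (Fin n))
    (hx0 : x 0 = fun _ => a) (hxhat0 : xhat 0 = fun _ => ahat)
    (hx : Adapted ℱ x) (hxhat : Adapted ℱ xhat)
    (S : EuclideanSpace ℝ (Fin n) → EuclideanSpace ℝ (Fin n) → ℝ)
    (hS_meas : Measurable (Function.uncurry S))
    (hS_nonneg : ∀ y z, 0 ≤ S y z)
    (α ψ : ℝ) (hα : 0 < α) (hψ : 0 ≤ ψ)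
    (hS_lower : ∀ y z, α * ‖y - z‖ ^ 2 ≤ S y z)
    (hint : ∀ k, Integrable (fun ω => S (x k ω) (xhat k ω)) μ)
    (hdrift : ∀ k,
      μ[fun ω => S (x (k + 1) ω) (xhat (k + 1) ω) | ℱ k] ≤ᵐ[μ]
        fun ω => S (x k ω) (xhat k ω) + ψ)
    (ε : ℝ) (hε : 0 < ε) (T : ℕ) :
    μ {ω | ∃ k ≤ T, ε ≤ ‖x k ω - xhat k ω‖} ≤
      ENNReal.ofReal ((S a ahat + ψ * T) / (α * ε ^ 2)) := by
  set g : ℕ → Ω → ℝ := fun k ω => S (x k ω) (xhat k ω) + ψ * (T - k)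
  have hsuper : Supermartingale g ℱ μ :=
    supermartingale_add_mul_sub_of_condExp_le_add
      (fun k => (hS_meas.comp ((hx k).prodMk (hxhat k))).stronglyMeasurable) hint hdrift T
  have hbudget : ∀ k ≤ T, 0 ≤ ψ * (T - k) := fun k hk =>
    mul_nonneg hψ (sub_nonneg.mpr (mod_cast hk))
  have hnonneg : ∀ k ≤ T, ∀ ω, 0 ≤ g k ω := fun k hk ω =>
    add_nonneg (hS_nonneg _ _) (hbudget k hk)
  have hsub : {ω | ∃ k ≤ T, ε ≤ ‖x k ω - xhat k ω‖} ⊆ {ω | ∃ k ≤ T, α * ε ^ 2 ≤ g k ω} := by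
    rintro ω ⟨k, hkT, hk⟩
    refine ⟨k, hkT, ?_⟩
    calc α * ε ^ 2 ≤ α * ‖x k ω - xhat k ω‖ ^ 2 := by gcongr
      _ ≤ S (x k ω) (xhat k ω) := hS_lower _ _
      _ ≤ g k ω := le_add_of_nonneg_right (hbudget k hkT)
  calc μ {ω | ∃ k ≤ T, ε ≤ ‖x k ω - xhat k ω‖}
      ≤ μ {ω | ∃ k ≤ T, α * ε ^ 2 ≤ g k ω} := measure_mono hsub
    _ ≤ ENNReal.ofReal ((∫ ω, g 0 ω ∂μ) / (α * ε ^ 2)) :=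
        hsuper.measure_exists_ge_le hnonneg (by positivity)
    _ = ENNReal.ofReal ((S a ahat + ψ * T) / (α * ε ^ 2)) := by simp [g, hx0, hxhat0]

/-- Theorem 4 of the paper (finite horizon): if `S` is a stochastic bisimulation function
between the adapted processes `x` and `x̂` (i.e. `α ‖x - x̂‖² ≤ S x x̂` and
`𝔼[S (x (k+1)) (x̂ (k+1)) | ℱ k] ≤ S (x k) (x̂ k) + ψ` a.s.), with deterministic initial
states `a` and `â`, then for every `ε > 0` and finite horizon `T ≥ 1`,
`ℙ{ sup_{0 ≤ k ≤ T} ‖x k - x̂ k‖ ≥ ε } ≤ (S a â + ψ T) / (α ε²)`. -/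
theorem sbf_probabilistic_closeness_finite_horizon
    {Ω : Type*} {m0 : MeasurableSpace Ω} {μ : Measure Ω} [IsProbabilityMeasure μ]
    {n : ℕ} (ℱ : Filtration ℕ m0)
    (x xhat : ℕ → Ω → EuclideanSpace ℝ (Fin n))
    (a ahat : EuclideanSpace ℝ (Fin n))
    (hx0 : x 0 = fun _ => a) (hxhat0 : xhat 0 = fun _ => ahat)
    (hx : Adapted ℱ x) (hxhat : Adapted ℱ xhat)
    (S : EuclideanSpace ℝ (Fin n) → EuclideanSpace ℝ (Fin n) → ℝ)
    (hS_meas : Measurable (Function.uncurry S))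
    (hS_nonneg : ∀ y z, 0 ≤ S y z)
    (α ψ : ℝ) (hα : 0 < α) (hψ : 0 ≤ ψ)
    (hS_lower : ∀ y z, α * ‖y - z‖ ^ 2 ≤ S y z)
    (hint : ∀ k, Integrable (fun ω => S (x k ω) (xhat k ω)) μ)
    (hdrift : ∀ k,
      μ[fun ω => S (x (k + 1) ω) (xhat (k + 1) ω) | ℱ k] ≤ᵐ[μ]
        fun ω => S (x k ω) (xhat k ω) + ψ)
    (ε : ℝ) (hε : 0 < ε) (T : ℕ) (hT : 0 < T) :
    μ {ω | ∃ k ≤ T, ε ≤ ‖x k ω - xhat k ω‖} ≤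
      ENNReal.ofReal ((S a ahat + ψ * T) / (α * ε ^ 2)) :=
  sbf_probabilistic_closeness_finite_horizon_general ℱ x xhat a ahat hx0 hxhat0 hx hxhat S hS_meas
    hS_nonneg α ψ hα hψ hS_lower hint hdrift ε hε T
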